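/- Let μ be a radially symmetric unimodal probability measure on ℝ^d, and write R(x,r) = μ(B(x,r)) and R*(r) = R(0,r). Let 0 < r₁ < r₂, and let P(B_{r₂−r₁}, r₁) denote the maximal number of pairwise disjoint closed balls of radius r₁ whose centers lie in the ball B(0, r₂−r₁). Then for any x with ‖x‖₂ = r₂, R(x, r₁) ≤ R*(r₂) / P(B_{r₂−r₁}, r₁). -/

import Mathlib

/-!
Reflection in the perpendicular bisector of `x` and `z` is a volume-preserving isometry swapping
`B(x, r)` and `B(z, r)`. If `‖z‖ ≤ ‖x‖`, it maps each point of `B(x, r) \ B(z, r)` to a point no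
farther from the origin, where the radial non-increasing density is at least as large; hence
`μ(B(x, r)) ≤ μ(B(z, r))`. The `r₁`-balls around the packing centres are disjoint, lie in
`B(0, r₂)`, and have centres of norm at most `r₂ - r₁ ≤ ‖x‖`, so each carries mass at least
`μ(B(x, r₁))`.
-/

open MeasureTheory EuclideanGeometry AffineSubspace Metric
open scoped ENNReal

section Reflection

variable {V P : Type*} [NormedAddCommGroup V] [InnerProductSpace ℝ V] [MetricSpace P]
  [NormedAddTorsor V P]

instance (p₁ p₂ : P) : Nonempty (perpBisector p₁ p₂) := perpBisector_nonempty.to_subtype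

variable [FiniteDimensional ℝ V]

theorem reflection_perpBisector_left (p₁ p₂ : P) : reflection (perpBisector p₁ p₂) p₁ = p₂ := by
  -- `p₁` is the midpoint plus a vector normal to the bisector, which the reflection negates
  have hv : p₁ -ᵥ midpoint ℝ p₁ p₂ ∈ (perpBisector p₁ p₂).directionᗮ := by
    rw [direction_perpBisector, left_vsub_midpoint]
    apply Submodule.le_orthogonal_orthogonal
    refine Submodule.mem_span_singleton.2 ⟨-⅟2, ?_⟩
    rw [← neg_vsub_eq_vsub_rev p₁ p₂, neg_smul, smul_neg, neg_neg]
  have h_neg := reflection_orthogonal_vadd (midpoint_mem_perpBisector p₁ p₂) hv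
  rwa [vsub_vadd, neg_vsub_eq_vsub_rev, midpoint_vsub_left, ← right_vsub_midpoint,
    vsub_vadd] at h_neg

theorem reflection_perpBisector_right (p₁ p₂ : P) : reflection (perpBisector p₁ p₂) p₂ = p₁ := by
  simpa only [reflection_perpBisector_left] using reflection_reflection (perpBisector p₁ p₂) p₁

theorem dist_reflection_perpBisector_le {p₁ p₂ o y : P} (ho : dist o p₂ ≤ dist o p₁)
    (hy : dist y p₁ ≤ dist y p₂) : dist o (reflection (perpBisector p₁ p₂) y) ≤ dist o y := by
  -- the segment from `o` to `y` crosses the bisector at some point `p`, which the reflection fixes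
  obtain ⟨t, ht, hpt⟩ : ∃ t ∈ Set.Icc (0 : ℝ) 1,
      dist (AffineMap.lineMap o y t) p₁ - dist (AffineMap.lineMap o y t) p₂ = 0 := by
    refine intermediate_value_Icc' zero_le_one (Continuous.continuousOn ?_) ?_
    · fun_prop
    · simp only [AffineMap.lineMap_apply_zero, AffineMap.lineMap_apply_one, Set.mem_Icc]
      constructor <;> linarith
  set p := AffineMap.lineMap o y t
  have hp : p ∈ perpBisector p₁ p₂ := mem_perpBisector_iff_dist_eq.2 (sub_eq_zero.1 hpt)
  calc dist o (reflection (perpBisector p₁ p₂) y)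
      ≤ dist o p + dist p (reflection (perpBisector p₁ p₂) y) := dist_triangle _ _ _
    _ = dist o p + dist p y := by rw [dist_reflection_eq_of_mem _ hp]
    _ = dist o y := (wbtw_lineMap_iff.2 (Or.inr ht)).dist_add_dist

end Reflection

theorem withDensity_le_withDensity_of_image_diff {α : Type*} [MeasurableSpace α] {ν : Measure α}
    {g : α → ℝ≥0∞} {σ : α → α} (hσ : MeasurePreserving σ ν ν) (hσe : MeasurableEmbedding σ)
    {A B : Set α} (hA : MeasurableSet A) (hB : MeasurableSet B) (hAB : σ '' (A \ B) = B \ A)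
    (hg : ∀ y ∈ A \ B, g y ≤ g (σ y)) : ν.withDensity g A ≤ ν.withDensity g B := by
  have h_diff : ν.withDensity g (A \ B) ≤ ν.withDensity g (B \ A) := calc
    ν.withDensity g (A \ B) = ∫⁻ y in A \ B, g y ∂ν := withDensity_apply _ (hA.diff hB)
    _ ≤ ∫⁻ y in A \ B, g (σ y) ∂ν := setLIntegral_mono' (hA.diff hB) hg
    _ = ∫⁻ y in B \ A, g y ∂ν := by rw [hσ.setLIntegral_comp_emb hσe, hAB]
    _ = ν.withDensity g (B \ A) := (withDensity_apply _ (hB.diff hA)).symm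
  rw [← measure_inter_add_sdiff A hB, ← measure_inter_add_sdiff B hA, Set.inter_comm]
  gcongr

section Volume

variable {V : Type*} [NormedAddCommGroup V] [InnerProductSpace ℝ V] [FiniteDimensional ℝ V]
  [MeasurableSpace V] [BorelSpace V]

theorem IsometryEquiv.measurePreserving_volume (e : V ≃ᵢ V) : MeasurePreserving e :=
  InnerProductSpace.euclideanHausdorffMeasure_eq_volume (V := V) ▸
    e.measurePreserving_euclideanHausdorffMeasure _

theorem withDensity_closedBall_le_of_norm_le {f : ℝ → ℝ≥0∞} (hf : AntitoneOn f (Set.Ici 0))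
    {x z : V} (hzx : ‖z‖ ≤ ‖x‖) (r : ℝ) :
    volume.withDensity (fun y => f ‖y‖) (closedBall x r) ≤
      volume.withDensity (fun y => f ‖y‖) (closedBall z r) := by
  set σ := (reflection (perpBisector x z)).toIsometryEquiv
  refine withDensity_le_withDensity_of_image_diff σ.measurePreserving_volume
    σ.toHomeomorph.measurableEmbedding measurableSet_closedBall measurableSet_closedBall ?_ ?_
  · rw [Set.image_sdiff σ.injective, σ.image_closedBall, σ.image_closedBall]
    simp only [σ, AffineIsometryEquiv.coe_toIsometryEquiv, reflection_perpBisector_left,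
      reflection_perpBisector_right]
  · rintro y ⟨hyx, hyz⟩
    rw [mem_closedBall] at hyx
    rw [mem_closedBall, not_le] at hyz
    refine hf (norm_nonneg _) (norm_nonneg _) ?_
    simpa only [σ, AffineIsometryEquiv.coe_toIsometryEquiv, dist_zero_left] using
      dist_reflection_perpBisector_le (o := (0 : V)) (by simpa only [dist_zero_left] using hzx)
        (hyx.trans hyz.le)

end Volume

theorem card_mul_le_measure_of_pairwiseDisjoint {α ι : Type*} [MeasurableSpace α] {μ : Measure α}
    {S : Finset ι} {s : ι → Set α} {t : Set α} {c : ℝ≥0∞} (hs : ∀ i ∈ S, MeasurableSet (s i))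
    (hdisj : (S : Set ι).PairwiseDisjoint s) (hst : ∀ i ∈ S, s i ⊆ t)
    (hc : ∀ i ∈ S, c ≤ μ (s i)) : S.card * c ≤ μ t := calc
  S.card * c = S.card • c := (nsmul_eq_mul _ _).symm
  _ ≤ ∑ i ∈ S, μ (s i) := Finset.card_nsmul_le_sum _ _ _ hc
  _ = μ (⋃ i ∈ S, s i) := (measure_biUnion_finset hdisj hs).symm
  _ ≤ μ t := measure_mono (Set.iUnion₂_subset hst)

theorem offcenter_ball_mass_packing_bound_general
    (d : ℕ) (f : ℝ → ℝ≥0∞)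
    (hf_mono : AntitoneOn f (Set.Ici 0))
    (μ : Measure (EuclideanSpace ℝ (Fin d)))
    (hμ : μ = volume.withDensity (fun x => f ‖x‖))
    (r₁ r₂ : ℝ) (hr₁ : 0 < r₁)
    (S : Finset (EuclideanSpace ℝ (Fin d)))
    (hS_in : ∀ z ∈ S, z ∈ Metric.closedBall (0 : EuclideanSpace ℝ (Fin d)) (r₂ - r₁))
    (hS_pack : ∀ z ∈ S, ∀ w ∈ S, z ≠ w → 2 * r₁ < dist z w)
    (x : EuclideanSpace ℝ (Fin d)) (hx : ‖x‖ = r₂) :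
    (S.card : ℝ≥0∞) * μ (Metric.closedBall x r₁) ≤ μ (Metric.closedBall 0 r₂) := by
  subst hμ
  refine card_mul_le_measure_of_pairwiseDisjoint (s := fun z => closedBall z r₁)
    (fun _ _ => measurableSet_closedBall) ?_ ?_ ?_
  · intro z hz w hw hzw
    exact closedBall_disjoint_closedBall (by linarith [hS_pack z hz w hw hzw])
  · intro z hz
    exact closedBall_subset_closedBall' (by linarith [mem_closedBall.1 (hS_in z hz)])
  · intro z hz
    refine withDensity_closedBall_le_of_norm_le hf_mono ?_ r₁
    linarith [mem_closedBall_zero_iff.1 (hS_in z hz)]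

/-- Packing bound for radially symmetric unimodal measures: if `S` is any
packing of `B(0, r₂ - r₁)` by centers of pairwise disjoint balls of radius
`r₁` (pairwise distances `> 2r₁`), then for any `x` with `‖x‖ = r₂`,
`|S| · μ(B(x, r₁)) ≤ μ(B(0, r₂))`, i.e. `μ(B(x,r₁)) ≤ R*(r₂)/P(B_{r₂-r₁}, r₁)`. -/
theorem offcenter_ball_mass_packing_bound
    (d : ℕ) (f : ℝ → ℝ≥0∞) (hf_meas : Measurable f)
    (hf_mono : AntitoneOn f (Set.Ici 0))
    (μ : Measure (EuclideanSpace ℝ (Fin d)))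
    (hμ : μ = volume.withDensity (fun x => f ‖x‖))
    (hprob : IsProbabilityMeasure μ)
    (r₁ r₂ : ℝ) (hr₁ : 0 < r₁) (hr₁₂ : r₁ < r₂)
    (S : Finset (EuclideanSpace ℝ (Fin d)))
    (hS_in : ∀ z ∈ S, z ∈ Metric.closedBall (0 : EuclideanSpace ℝ (Fin d)) (r₂ - r₁))
    (hS_pack : ∀ z ∈ S, ∀ w ∈ S, z ≠ w → 2 * r₁ < dist z w)
    (x : EuclideanSpace ℝ (Fin d)) (hx : ‖x‖ = r₂) :
    (S.card : ℝ≥0∞) * μ (Metric.closedBall x r₁) ≤ μ (Metric.closedBall 0 r₂) :=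
  offcenter_ball_mass_packing_bound_general d f hf_mono μ hμ r₁ r₂ hr₁ S hS_in hS_pack x hx
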